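/- Assume the Trudinger–Moser property holds with some constant ω ∈ (0,π] and that f satisfies hypotheses (H'), with ψ ∈ X, ‖ψ‖_X = 1, as in (H')(v). Let t > 0 be such that φ(tψ) < φ(0) = 0, and let Γ be the set of continuous paths γ : [0,1] → (X, ‖·‖_X) with γ(0) = 0 and γ(1) = tψ. Then the mountain pass level c = inf_{γ∈Γ} max_{τ∈[0,1]} φ(γ(τ)) satisfies c < ω/(2α₀). -/

import Mathlib

open MeasureTheory Real Set Filter Topology

noncomputable section

/-- Integrand of the squared Gagliardo `H^{1/2}` seminorm on `ℝ`. -/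
def gagKer (u : ℝ → ℝ) : ℝ × ℝ → ℝ :=
  fun p => (u p.1 - u p.2) ^ 2 / |p.1 - p.2| ^ 2

/-- Integrand of the Gagliardo inner product `⟨u,v⟩_X`. -/
def innerKer (u v : ℝ → ℝ) : ℝ × ℝ → ℝ :=
  fun p => (u p.1 - u p.2) * (v p.1 - v p.2) / |p.1 - p.2| ^ 2

/-- `u ∈ H^{1/2}(ℝ)` : `u ∈ L²(ℝ)` with finite Gagliardo seminorm. -/
def memH (u : ℝ → ℝ) : Prop :=
  Measurable u ∧ Integrable (fun x => (u x) ^ 2) ∧ Integrable (gagKer u)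

/-- Squared Gagliardo seminorm `[u]²`. -/
def gagSq (u : ℝ → ℝ) : ℝ := ∫ p : ℝ × ℝ, gagKer u p

/-- Gagliardo seminorm `[u]`, i.e. the norm `‖u‖_X`. -/
def gagNorm (u : ℝ → ℝ) : ℝ := Real.sqrt (gagSq u)

/-- Inner product `⟨u, v⟩_X`. -/
def innerX (u v : ℝ → ℝ) : ℝ := ∫ p : ℝ × ℝ, innerKer u v p

/-- `u ∈ X` : `u ∈ H^{1/2}(ℝ)` and `u = 0` a.e. outside `(0,1)`. -/
def memX (u : ℝ → ℝ) : Prop :=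
  memH u ∧ ∀ᵐ x : ℝ, x ∉ Ioo (0 : ℝ) 1 → u x = 0

/-- `λ₁ = inf {[u]² : u ∈ X, ‖u‖_{L²(0,1)} = 1}`. -/
def lam1 : ℝ :=
  sInf { t : ℝ | ∃ u : ℝ → ℝ, memX u ∧ (∫ x in Ioo (0 : ℝ) 1, (u x) ^ 2) = 1 ∧ gagSq u = t }

/-- Trudinger–Moser property with constant `ω`. -/
def TMprop (ω : ℝ) : Prop :=
  ∀ α : ℝ, 0 < α → α < 2 * π * ω →
    ∃ K : ℝ, 0 < K ∧ ∀ u : ℝ → ℝ, memX u → gagNorm u ≤ 1 →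
      (∫⁻ x in Ioo (0 : ℝ) 1, ENNReal.ofReal (exp (α * (u x) ^ 2))) ≤ ENNReal.ofReal K

/-- The primitive `F(t) = ∫₀ᵗ f(τ) dτ`. -/
def primF (f : ℝ → ℝ) : ℝ → ℝ := fun t => ∫ τ in (0 : ℝ)..t, f τ

/-- Hypotheses (H). -/
def HypH (f : ℝ → ℝ) : Prop :=
  Continuous f ∧ f 0 = 0 ∧
  (∃ t₀ > (0 : ℝ), ∃ M > (0 : ℝ),
    ∀ t : ℝ, t₀ ≤ |t| → 0 < primF f t ∧ primF f t ≤ M * |f t|) ∧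
  (∀ t : ℝ, t ≠ 0 → 0 < 2 * primF f t ∧ 2 * primF f t ≤ f t * t) ∧
  (Filter.limsup (fun t => primF f t / t ^ 2) (𝓝[≠] (0 : ℝ)) < lam1 / (4 * π)) ∧
  (∀ α : ℝ, 0 < α →
    Filter.Tendsto (fun t => |f t| * exp (-α * t ^ 2)) (Filter.cocompact ℝ) (𝓝 0))

/-- Hypotheses (H') with Trudinger–Moser constant `ω`. -/
def HypH' (f : ℝ → ℝ) (ω : ℝ) : Prop :=
  Continuous f ∧ f 0 = 0 ∧
  (∃ t₀ > (0 : ℝ), ∃ M > (0 : ℝ),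
    ∀ t : ℝ, t₀ ≤ |t| → 0 < primF f t ∧ primF f t ≤ M * |f t|) ∧
  (∀ t : ℝ, t ≠ 0 → 0 < 2 * primF f t ∧ 2 * primF f t ≤ f t * t) ∧
  (Filter.limsup (fun t => primF f t / t ^ 2) (𝓝[≠] (0 : ℝ)) < lam1 / (4 * π)) ∧
  ∃ α₀ : ℝ, 0 < α₀ ∧ α₀ < 2 * π * ω ∧
    (∀ α : ℝ, 0 < α → α < α₀ →
      Filter.Tendsto (fun t => |f t| * exp (-α * t ^ 2)) (Filter.cocompact ℝ) Filter.atTop) ∧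
    (∀ α : ℝ, α₀ < α →
      Filter.Tendsto (fun t => |f t| * exp (-α * t ^ 2)) (Filter.cocompact ℝ) (𝓝 0)) ∧
    ∃ ψ : ℝ → ℝ, memX ψ ∧ gagNorm ψ = 1 ∧
      ∃ b : ℝ, b < ω / (2 * α₀) ∧ ∀ t : ℝ, 0 < t →
        t ^ 2 / (4 * π) - (∫ x in Ioo (0 : ℝ) 1, primF f (t * ψ x)) ≤ b

/-- `u` is a (weak) solution of `(-Δ)^{1/2} u = f(u)` in `(0,1)`, `u = 0` outside. -/
def IsWeakSolution (f u : ℝ → ℝ) : Prop :=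
  memX u ∧ ∀ v : ℝ → ℝ, memX v →
    IntegrableOn (fun x => f (u x) * v x) (Ioo (0 : ℝ) 1) ∧
    innerX u v / (2 * π) = ∫ x in Ioo (0 : ℝ) 1, f (u x) * v x

/-- The energy functional `φ(u) = ‖u‖_X²/(4π) - ∫₀¹ F(u) dx`. -/
def phi (f u : ℝ → ℝ) : ℝ :=
  gagSq u / (4 * π) - ∫ x in Ioo (0 : ℝ) 1, primF f (u x)

/-- `⟨φ'(u), v⟩ = (1/(2π))⟨u,v⟩_X - ∫₀¹ f(u) v dx`. -/
def phiDeriv (f u v : ℝ → ℝ) : ℝ :=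
  innerX u v / (2 * π) - ∫ x in Ioo (0 : ℝ) 1, f (u x) * v x

/-- The Palais–Smale condition at level `c`. -/
def PalaisSmaleAt (f : ℝ → ℝ) (c : ℝ) : Prop :=
  ∀ u : ℕ → ℝ → ℝ, (∀ n, memX (u n)) →
    Filter.Tendsto (fun n => phi f (u n)) Filter.atTop (𝓝 c) →
    (∃ ε : ℕ → ℝ, Filter.Tendsto ε Filter.atTop (𝓝 0) ∧
      ∀ n, ∀ v : ℝ → ℝ, memX v → gagNorm v ≤ 1 → |phiDeriv f (u n) v| ≤ ε n) →
    ∃ w : ℝ → ℝ, memX w ∧ ∃ g : ℕ → ℕ, StrictMono g ∧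
      Filter.Tendsto (fun k => gagNorm (fun x => u (g k) x - w x)) Filter.atTop (𝓝 0)

/-!
The segment `τ ↦ τ t ψ` from `0` to `tψ` is an admissible path. Since `‖ψ‖_X = 1`, the energy
at `sψ` is exactly `s²/(4π) - ∫₀¹ F(sψ)`, which hypothesis (v) bounds by some `b < ω/(2α₀)`
for `s > 0`, while `φ(0) = 0 < ω/(2α₀)`. Hence `φ` stays below `max b 0 < ω/(2α₀)` on the path.
-/

lemma gagKer_const_mul (c : ℝ) (u : ℝ → ℝ) :
    gagKer (fun x => c * u x) = fun p => c ^ 2 * gagKer u p := by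
  funext p
  simp only [gagKer]
  rw [← mul_sub, mul_pow, mul_div_assoc]

lemma gagSq_const_mul (c : ℝ) (u : ℝ → ℝ) :
    gagSq (fun x => c * u x) = c ^ 2 * gagSq u := by
  rw [gagSq, gagKer_const_mul, integral_const_mul, gagSq]

lemma gagSq_nonneg (u : ℝ → ℝ) : 0 ≤ gagSq u :=
  integral_nonneg fun _ => div_nonneg (sq_nonneg _) (sq_nonneg _)

lemma gagSq_eq_gagNorm_sq (u : ℝ → ℝ) : gagSq u = gagNorm u ^ 2 :=
  (Real.sq_sqrt (gagSq_nonneg u)).symm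

lemma gagNorm_const_mul (c : ℝ) (u : ℝ → ℝ) :
    gagNorm (fun x => c * u x) = |c| * gagNorm u := by
  rw [gagNorm, gagSq_const_mul, Real.sqrt_mul (sq_nonneg c), Real.sqrt_sq_eq_abs, gagNorm]

lemma memX_const_mul (c : ℝ) {u : ℝ → ℝ} (hu : memX u) : memX (fun x => c * u x) := by
  obtain ⟨⟨hmeas, hsq, hker⟩, hsupp⟩ := hu
  refine ⟨⟨hmeas.const_mul c, ?_, ?_⟩, ?_⟩
  · simpa only [mul_pow] using hsq.const_mul (c ^ 2)
  · rw [gagKer_const_mul]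
    exact hker.const_mul _
  · filter_upwards [hsupp] with x hx hout
    rw [hx hout, mul_zero]

lemma exists_gagNorm_mul_sub_lt (u : ℝ → ℝ) (τ : ℝ) {ε : ℝ} (hε : 0 < ε) :
    ∃ δ : ℝ, 0 < δ ∧ ∀ σ : ℝ, |σ - τ| < δ → gagNorm (fun x => σ * u x - τ * u x) < ε := by
  have hnorm : 0 < gagNorm u + 1 := add_pos_of_nonneg_of_pos (Real.sqrt_nonneg _) one_pos
  refine ⟨ε / (gagNorm u + 1), div_pos hε hnorm, fun σ hσ => ?_⟩
  simp_rw [← sub_mul]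
  rw [gagNorm_const_mul]
  calc |σ - τ| * gagNorm u ≤ |σ - τ| * (gagNorm u + 1) := by gcongr; linarith
    _ < ε / (gagNorm u + 1) * (gagNorm u + 1) := by gcongr
    _ = ε := div_mul_cancel₀ ε hnorm.ne'

lemma primF_zero (f : ℝ → ℝ) : primF f 0 = 0 :=
  intervalIntegral.integral_same

lemma phi_zero (f : ℝ → ℝ) : phi f (fun _ => 0) = 0 := by
  simp [phi, gagSq, gagKer, primF_zero]

lemma phi_const_mul_of_gagNorm_eq_one (f : ℝ → ℝ) {ψ : ℝ → ℝ} (hψ : gagNorm ψ = 1) (s : ℝ) :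
    phi f (fun x => s * ψ x) = s ^ 2 / (4 * π) - ∫ x in Ioo (0 : ℝ) 1, primF f (s * ψ x) := by
  rw [phi, gagSq_const_mul, gagSq_eq_gagNorm_sq, hψ, one_pow, mul_one]

lemma phi_const_mul_le {f ψ : ℝ → ℝ} (hψ : gagNorm ψ = 1) {b : ℝ} (hb : 0 ≤ b)
    (hray : ∀ s : ℝ, 0 < s → s ^ 2 / (4 * π) - (∫ x in Ioo (0 : ℝ) 1, primF f (s * ψ x)) ≤ b)
    {s : ℝ} (hs : 0 ≤ s) : phi f (fun x => s * ψ x) ≤ b := by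
  rcases hs.eq_or_lt with rfl | hs
  · simpa only [zero_mul, phi_zero] using hb
  · rw [phi_const_mul_of_gagNorm_eq_one f hψ]
    exact hray s hs

theorem statement19_general (ω : ℝ) (hω0 : 0 < ω)
    (f : ℝ → ℝ)
    (α₀ : ℝ) (hα₀0 : 0 < α₀)
    (ψ : ℝ → ℝ) (hψX : memX ψ) (hψn : gagNorm ψ = 1)
    (hv : ∃ b : ℝ, b < ω / (2 * α₀) ∧ ∀ t : ℝ, 0 < t →
      t ^ 2 / (4 * π) - (∫ x in Ioo (0 : ℝ) 1, primF f (t * ψ x)) ≤ b)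
    (t : ℝ) (ht : 0 < t) :
    ∃ γ : ℝ → ℝ → ℝ,
      (∀ τ ∈ Icc (0 : ℝ) 1, memX (γ τ)) ∧
      (γ 0 = fun _ => 0) ∧ (γ 1 = fun x => t * ψ x) ∧
      (∀ τ ∈ Icc (0 : ℝ) 1, ∀ ε : ℝ, 0 < ε → ∃ δ : ℝ, 0 < δ ∧
        ∀ σ ∈ Icc (0 : ℝ) 1, |σ - τ| < δ → gagNorm (fun x => γ σ x - γ τ x) < ε) ∧
      ∃ b : ℝ, b < ω / (2 * α₀) ∧ ∀ τ ∈ Icc (0 : ℝ) 1, phi f (γ τ) ≤ b := by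
  obtain ⟨b, hb, hray⟩ := hv
  have hlevel : 0 < ω / (2 * α₀) := by positivity
  refine ⟨fun τ x => τ * (t * ψ x), fun τ _ => memX_const_mul τ (memX_const_mul t hψX),
    by simp only [zero_mul], by simp only [one_mul], fun τ _ ε hε => ?_,
    max b 0, max_lt hb hlevel, fun τ hτ => ?_⟩
  · obtain ⟨δ, hδ, hclose⟩ := exists_gagNorm_mul_sub_lt (fun x => t * ψ x) τ hε
    exact ⟨δ, hδ, fun σ _ => hclose σ⟩
  · simp_rw [← mul_assoc]
    exact phi_const_mul_le hψn (le_max_right b 0)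
      (fun s hs => (hray s hs).trans (le_max_left b 0)) (mul_nonneg hτ.1 ht.le)

/-- the mountain pass level lies below `ω/(2α₀)`. The level
`c = inf_{γ ∈ Γ} max_{τ ∈ [0,1]} φ(γ(τ))` satisfies `c < ω/(2α₀)`, i.e. there is
an admissible path along which `φ` stays below some `b < ω/(2α₀)`. -/
theorem statement19 (ω : ℝ) (hω0 : 0 < ω) (hωπ : ω ≤ π) (hTM : TMprop ω)
    (f : ℝ → ℝ) (hcont : Continuous f) (hf0 : f 0 = 0)
    (hi : ∃ t₀ > (0 : ℝ), ∃ M > (0 : ℝ),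
      ∀ t : ℝ, t₀ ≤ |t| → 0 < primF f t ∧ primF f t ≤ M * |f t|)
    (hii : ∀ t : ℝ, t ≠ 0 → 0 < 2 * primF f t ∧ 2 * primF f t ≤ f t * t)
    (hiii : Filter.limsup (fun t => primF f t / t ^ 2) (𝓝[≠] (0 : ℝ)) < lam1 / (4 * π))
    (α₀ : ℝ) (hα₀0 : 0 < α₀) (hα₀ : α₀ < 2 * π * ω)
    (hiv1 : ∀ α : ℝ, 0 < α → α < α₀ →
      Filter.Tendsto (fun t => |f t| * exp (-α * t ^ 2)) (Filter.cocompact ℝ) Filter.atTop)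
    (hiv2 : ∀ α : ℝ, α₀ < α →
      Filter.Tendsto (fun t => |f t| * exp (-α * t ^ 2)) (Filter.cocompact ℝ) (𝓝 0))
    (ψ : ℝ → ℝ) (hψX : memX ψ) (hψn : gagNorm ψ = 1)
    (hv : ∃ b : ℝ, b < ω / (2 * α₀) ∧ ∀ t : ℝ, 0 < t →
      t ^ 2 / (4 * π) - (∫ x in Ioo (0 : ℝ) 1, primF f (t * ψ x)) ≤ b)
    (t : ℝ) (ht : 0 < t) (htneg : phi f (fun x => t * ψ x) < phi f (fun _ => 0)) :
    ∃ γ : ℝ → ℝ → ℝ,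
      (∀ τ ∈ Icc (0 : ℝ) 1, memX (γ τ)) ∧
      (γ 0 = fun _ => 0) ∧ (γ 1 = fun x => t * ψ x) ∧
      (∀ τ ∈ Icc (0 : ℝ) 1, ∀ ε : ℝ, 0 < ε → ∃ δ : ℝ, 0 < δ ∧
        ∀ σ ∈ Icc (0 : ℝ) 1, |σ - τ| < δ → gagNorm (fun x => γ σ x - γ τ x) < ε) ∧
      ∃ b : ℝ, b < ω / (2 * α₀) ∧ ∀ τ ∈ Icc (0 : ℝ) 1, phi f (γ τ) ≤ b :=
  statement19_general ω hω0 f α₀ hα₀0 ψ hψX hψn hv t ht
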